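/- arXiv:1702.03606 — 2 statements merged into one kernel-verified Lean document; each statement's English description precedes it below -/
import Mathlib

section
/- If x is a simplex of dimension d in a finite abstract simplicial complex G, then the stable sphere S^-(x) in the Barycentric refinement G_1, namely the graph on all proper nonempty subsets of x with adjacency given by proper inclusion, is a (d−1)-sphere in the sense of Evako. -/
/-- The Zykov join of two finite simple graphs: take the disjoint union of the
vertex sets, keep all edges of both graphs, and connect every vertex of the
first graph with every vertex of the second graph. -/
def zykovJoin {V W : Type} (G : SimpleGraph V) (H : SimpleGraph W) :
    SimpleGraph (V ⊕ W) where
  Adj x y :=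
    match x, y with
    | Sum.inl a, Sum.inl b => G.Adj a b
    | Sum.inr a, Sum.inr b => H.Adj a b
    | _, _ => True
  symm := by
    refine ⟨?_⟩
    intro x y h
    cases x <;> cases y
    · exact G.adj_symm h
    · trivial
    · trivial
    · exact H.adj_symm h
  loopless := by
    refine ⟨?_⟩
    intro x
    cases x
    · exact G.irrefl
    · exact H.irrefl

/-- A finite abstract simplicial complex on a vertex type `α`: a finite set of
nonempty finite sets (simplices) closed under taking nonempty subsets. -/
def IsSimplicialComplex {α : Type} [DecidableEq α] (K : Finset (Finset α)) : Prop :=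
  (∀ s ∈ K, s.Nonempty) ∧ ∀ s ∈ K, ∀ t ⊆ s, t.Nonempty → t ∈ K

/-- The Barycentric refinement of a finite abstract simplicial complex `K`:
the graph whose vertices are the simplices of `K`, two simplices being
adjacent iff one is a proper subset of the other. -/
def barycentric {α : Type} [DecidableEq α] (K : Finset (Finset α)) :
    SimpleGraph {s : Finset α // s ∈ K} where
  Adj x y := x.1 ⊂ y.1 ∨ y.1 ⊂ x.1
  symm := by refine ⟨?_⟩; intro x y h; tauto
  loopless := by refine ⟨?_⟩; intro x h; rcases h with h | h <;> exact (lt_irrefl _ h)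

/-- A finite simple graph is contractible (in the inductive sense of Ivashchenko)
if it is the one-point graph, or if it has a vertex `v` whose unit sphere
(induced subgraph on the neighbors of `v`) and whose removal are both
contractible. -/
inductive GraphContractible : ∀ {V : Type}, SimpleGraph V → Prop
  | point {V : Type} (G : SimpleGraph V) (h : ∃ v : V, ∀ w : V, w = v) :
      GraphContractible G
  | step {V : Type} (G : SimpleGraph V) (v : V)
      (h1 : GraphContractible (G.induce (G.neighborSet v)))
      (h2 : GraphContractible (G.induce {w : V | w ≠ v})) :
      GraphContractible G

/-- Evako `d`-spheres, defined inductively: the empty graph is the unique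
`(-1)`-sphere; a graph is a `d`-sphere if every unit sphere in it is a
`(d-1)`-sphere and removing some vertex leaves a contractible graph. -/
inductive EvakoSphere : ∀ {V : Type}, SimpleGraph V → ℤ → Prop
  | empty {V : Type} (G : SimpleGraph V) (h : IsEmpty V) : EvakoSphere G (-1)
  | step {V : Type} (G : SimpleGraph V) (d : ℤ)
      (hS : ∀ v : V, EvakoSphere (G.induce (G.neighborSet v)) (d - 1))
      (hv : ∃ v : V, GraphContractible (G.induce {w : V | w ≠ v})) :
      EvakoSphere G d

/-!
The stable sphere `S⁻(x)` is the link of the flag `∅ ⊂ x` in the order complex of the Boolean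
lattice. More generally, the link of a flag `F` in an interval `[a, b]` whose cardinalities miss
`n` values is an `(n - 1)`-sphere, by induction on `n`. The unit sphere of a vertex `u` is the
link of the longer flag `F ∪ {u}`. For the contractibility condition, `F` has consecutive members
`f ⊂ g` with `#g ≥ #f + 2`; pick `p ∈ g \ f`. After removing `g \ {p}`, the sets strictly between
`f` and `g` that avoid `p` can be deleted one at a time, largest first, and what remains is a
cone with apex `f ∪ {p}`.
-/

namespace SimpleGraph

variable {V W : Type}

def induceInduceIso (G : SimpleGraph V) (S : Set V) (T : Set S) (P : V → Prop)
    (hT : ∀ w : S, w ∈ T ↔ P w) : (G.induce S).induce T ≃g G.induce {u | u ∈ S ∧ P u} where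
  toFun w := ⟨w.1.1, w.1.2, (hT w.1).1 w.2⟩
  invFun u := ⟨⟨u.1, u.2.1⟩, (hT _).2 u.2.2⟩
  left_inv _ := rfl
  right_inv _ := rfl
  map_rel_iff' := Iff.rfl

namespace Iso

variable {G : SimpleGraph V} {H : SimpleGraph W}

def induceNeighborSet (e : G ≃g H) (v : V) :
    G.induce (G.neighborSet v) ≃g H.induce (H.neighborSet (e v)) :=
  e.induce (e.toEquiv.bijOn fun _ => e.map_adj_iff)

def induceNe (e : G ≃g H) (v : V) : G.induce {w | w ≠ v} ≃g H.induce {w | w ≠ e v} :=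
  e.induce (e.toEquiv.bijOn fun _ => e.injective.ne_iff)

end Iso

end SimpleGraph

theorem GraphContractible.of_iso {V : Type} {G : SimpleGraph V} (hG : GraphContractible G) :
    ∀ {W : Type} {H : SimpleGraph W}, G ≃g H → GraphContractible H := by
  induction hG with
  | point G h =>
    obtain ⟨v, hv⟩ := h
    exact fun e => .point _ ⟨e v, fun w => by rw [← e.apply_symm_apply w, hv (e.symm w)]⟩
  | step G v _ _ ih₁ ih₂ =>
    exact fun e => .step _ (e v) (ih₁ (e.induceNeighborSet v)) (ih₂ (e.induceNe v))

theorem EvakoSphere.of_iso {V : Type} {G : SimpleGraph V} {d : ℤ} (hG : EvakoSphere G d) :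
    ∀ {W : Type} {H : SimpleGraph W}, G ≃g H → EvakoSphere H d := by
  induction hG with
  | empty G h => exact fun e => .empty _ e.symm.toEquiv.isEmpty
  | step G d _ hv ih =>
    intro W H e
    refine .step _ d (fun w => ?_) ?_
    · have := ih (e.symm w) (e.induceNeighborSet (e.symm w))
      rwa [e.apply_symm_apply] at this
    · obtain ⟨v, hv⟩ := hv
      exact ⟨e v, hv.of_iso (e.induceNe v)⟩

section Induce

variable {V : Type} {G : SimpleGraph V} {S : Set V}

theorem GraphContractible.induce_of_mem {v : V} (hv : v ∈ S)
    (hlink : GraphContractible (G.induce {u | u ∈ S ∧ G.Adj v u}))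
    (hdel : GraphContractible (G.induce {u | u ∈ S ∧ u ≠ v})) :
    GraphContractible (G.induce S) :=
  .step _ ⟨v, hv⟩ (hlink.of_iso (G.induceInduceIso S _ _ fun _ => Iff.rfl).symm)
    (hdel.of_iso (G.induceInduceIso S _ _ fun _ => Subtype.ext_iff.not).symm)

theorem EvakoSphere.induce_of_forall {d : ℤ}
    (hlink : ∀ v ∈ S, EvakoSphere (G.induce {u | u ∈ S ∧ G.Adj v u}) (d - 1))
    (hdel : ∃ v ∈ S, GraphContractible (G.induce {u | u ∈ S ∧ u ≠ v})) :
    EvakoSphere (G.induce S) d := by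
  obtain ⟨v, hv, hdel⟩ := hdel
  exact .step _ d
    (fun w => (hlink w.1 w.2).of_iso (G.induceInduceIso S _ _ fun _ => Iff.rfl).symm)
    ⟨⟨v, hv⟩, hdel.of_iso (G.induceInduceIso S _ _ fun _ => Subtype.ext_iff.not).symm⟩

theorem GraphContractible.induce_of_forall_adj (hS : S.Finite) {v : V} (hv : v ∈ S)
    (h : ∀ w ∈ S, w ≠ v → G.Adj v w) : GraphContractible (G.induce S) := by
  induction hn : S.ncard using Nat.strong_induction_on generalizing S with
  | _ n ih =>
  by_cases hall : ∀ w ∈ S, w = v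
  · exact .point _ ⟨⟨v, hv⟩, fun w => Subtype.ext (hall w.1 w.2)⟩
  push Not at hall
  obtain ⟨w, hwS, hwv⟩ := hall
  have hlt : ∀ P : V → Prop, ¬ P w → {u | u ∈ S ∧ P u}.ncard < n := fun P hP =>
    hn ▸ Set.ncard_lt_ncard ⟨fun u hu => hu.1, fun h => hP (h hwS).2⟩ hS
  have hsub : ∀ P : V → Prop, {u | u ∈ S ∧ P u}.Finite := fun P => hS.subset fun u hu => hu.1
  exact .induce_of_mem hwS
    (ih _ (hlt _ (G.loopless.irrefl w)) (hsub _) ⟨hv, (h w hwS hwv).symm⟩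
      (fun u hu hne => h u hu.1 hne) rfl)
    (ih _ (hlt _ (not_not.2 rfl)) (hsub _) ⟨hv, hwv.symm⟩ (fun u hu hne => h u hu.1 hne) rfl)

end Induce

namespace Finset

variable {α : Type}

/-- `barycentric K` is the restriction of this graph to `K`. -/
def ssubsetGraph : SimpleGraph (Finset α) where
  Adj s t := s ⊂ t ∨ t ⊂ s
  symm := by refine ⟨?_⟩; intro s t h; tauto
  loopless := by refine ⟨?_⟩; intro s h; rcases h with h | h <;> exact lt_irrefl _ h

theorem ssubsetGraph_adj_iff {s t : Finset α} :
    ssubsetGraph.Adj s t ↔ s ≠ t ∧ (s ⊆ t ∨ t ⊆ s) := by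
  simp only [ssubsetGraph, ssubset_iff_subset_ne]
  grind

structure IsFlag (a b : Finset α) (F : Finset (Finset α)) : Prop where
  isChain : IsChain (· ⊆ ·) (F : Set (Finset α))
  bot_mem : a ∈ F
  top_mem : b ∈ F
  bounds : ∀ f ∈ F, a ⊆ f ∧ f ⊆ b

/-- The link of the flag `F` in the order complex of the interval `[a, b]`. -/
def flagLink (a b : Finset α) (F : Finset (Finset α)) : Set (Finset α) :=
  {u | a ⊆ u ∧ u ⊆ b ∧ u ∉ F ∧ ∀ f ∈ F, f ⊆ u ∨ u ⊆ f}

section Flag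

variable {a b u : Finset α} {F : Finset (Finset α)}

namespace IsFlag

theorem subset_of_card_le (hF : IsFlag a b F) {f g : Finset α} (hf : f ∈ F) (hg : g ∈ F)
    (h : f.card ≤ g.card) : f ⊆ g := by
  rcases hF.isChain.total hf hg with hfg | hgf
  · exact hfg
  · exact (eq_of_subset_of_card_le hgf h).symm.subset

theorem injOn_card (hF : IsFlag a b F) : Set.InjOn card (F : Set (Finset α)) :=
  fun _ hf _ hg h => (hF.subset_of_card_le hf hg h.le).antisymm (hF.subset_of_card_le hg hf h.ge)

theorem card_add_le (hF : IsFlag a b F) : a.card + F.card ≤ b.card + 1 := by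
  have := card_le_card_of_injOn card (t := Icc a.card b.card)
    (fun f hf => mem_Icc.2 ⟨card_le_card (hF.bounds f hf).1, card_le_card (hF.bounds f hf).2⟩)
    hF.injOn_card
  rw [Nat.card_Icc] at this
  have hab := card_le_card (hF.bounds a hF.bot_mem).2
  omega

/-- A flag that is not maximal skips some cardinality `r`; take for `f` and `g` the members
closest to `r` from below and from above. -/
theorem exists_gap (hF : IsFlag a b F) (hcard : a.card + F.card ≤ b.card) :
    ∃ f ∈ F, ∃ g ∈ F, f.card + 2 ≤ g.card ∧ f ⊆ g ∧ ∀ h ∈ F, h ⊆ f ∨ g ⊆ h := by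
  obtain ⟨r, hr, hrF⟩ : ∃ r ∈ Icc a.card b.card, r ∉ F.image card :=
    exists_mem_notMem_of_card_lt_card (by
      rw [card_image_of_injOn hF.injOn_card, Nat.card_Icc]
      omega)
  simp only [mem_image, not_exists, not_and] at hrF
  have har : a.card < r := lt_of_le_of_ne (mem_Icc.1 hr).1 (hrF a hF.bot_mem)
  have hrb : r < b.card := lt_of_le_of_ne (mem_Icc.1 hr).2 fun h => hrF b hF.top_mem h.symm
  obtain ⟨f, hf, hfmax⟩ := (F.filter (card · < r)).exists_max_image card
    ⟨a, mem_filter.2 ⟨hF.bot_mem, har⟩⟩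
  obtain ⟨g, hg, hgmin⟩ := (F.filter (r < card ·)).exists_min_image card
    ⟨b, mem_filter.2 ⟨hF.top_mem, hrb⟩⟩
  rw [mem_filter] at hf hg
  refine ⟨f, hf.1, g, hg.1, by omega, hF.subset_of_card_le hf.1 hg.1 (by omega), fun h hh => ?_⟩
  rcases lt_or_gt_of_ne (hrF h hh) with hlt | hgt
  · exact .inl (hF.subset_of_card_le hh hf.1 (hfmax h (mem_filter.2 ⟨hh, hlt⟩)))
  · exact .inr (hF.subset_of_card_le hg.1 hh (hgmin h (mem_filter.2 ⟨hh, hgt⟩)))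

theorem mem_flagLink_of_gap (hF : IsFlag a b F) {f g : Finset α} (hf : f ∈ F) (hg : g ∈ F)
    (hgap : ∀ h ∈ F, h ⊆ f ∨ g ⊆ h) (hfu : f ⊂ u) (hug : u ⊂ g) : u ∈ flagLink a b F := by
  refine ⟨(hF.bounds f hf).1.trans hfu.subset, hug.subset.trans (hF.bounds g hg).2,
    fun hu => ?_, fun h hh => (hgap h hh).imp (·.trans hfu.subset) hug.subset.trans⟩
  rcases hgap u hu with huf | hgu
  · exact hfu.2 huf
  · exact hug.2 hgu

theorem insert [DecidableEq α] (hF : IsFlag a b F) (hu : u ∈ flagLink a b F) :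
    IsFlag a b (insert u F) where
  isChain := by
    rw [coe_insert]
    exact hF.isChain.insert fun f hf _ => (hu.2.2.2 f hf).symm
  bot_mem := mem_insert_of_mem hF.bot_mem
  top_mem := mem_insert_of_mem hF.top_mem
  bounds := forall_mem_insert _ _ _ |>.2 ⟨⟨hu.1, hu.2.1⟩, hF.bounds⟩

theorem flagLink_eq_empty [DecidableEq α] (hF : IsFlag a b F)
    (hcard : b.card + 1 = a.card + F.card) : flagLink a b F = ∅ := by
  refine Set.eq_empty_iff_forall_notMem.2 fun u hu => ?_
  have := (hF.insert hu).card_add_le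
  rw [card_insert_of_notMem hu.2.2.1] at this
  omega

end IsFlag

theorem flagLink_finite : (flagLink a b F).Finite :=
  b.powerset.finite_toSet.subset fun _ hu => mem_powerset.2 hu.2.1

theorem ssubsetGraph_adj_of_mem_flagLink {f : Finset α} (hu : u ∈ flagLink a b F) (hf : f ∈ F) :
    ssubsetGraph.Adj f u :=
  ssubsetGraph_adj_iff.2 ⟨fun h => hu.2.2.1 (h ▸ hf), hu.2.2.2 f hf⟩

theorem flagLink_insert [DecidableEq α] :
    {w | w ∈ flagLink a b F ∧ ssubsetGraph.Adj u w} = flagLink a b (insert u F) := by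
  ext w
  simp only [flagLink, ssubsetGraph_adj_iff, Set.mem_ofPred_eq, mem_insert, forall_eq_or_imp]
  grind

end Flag

variable [DecidableEq α]

theorem insert_ssubset_of_ssubset_erase {s g : Finset α} {p : α} (hp : p ∈ g)
    (hs : s ⊂ g.erase p) : insert p s ⊂ g := by
  refine ssubset_iff_subset_ne.2 ⟨insert_subset hp (hs.subset.trans (erase_subset p g)), ?_⟩
  rintro rfl
  exact hs.2 (erase_insert_subset p s)

theorem ssubsetGraph_adj_insert {s w g : Finset α} {p : α} (hp : p ∈ g) (hsg : s ⊆ g)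
    (hsw : ssubsetGraph.Adj s w) (hgw : ssubsetGraph.Adj g w) (hpw : s ⊂ w → w ⊂ g → p ∈ w)
    (hne : w ≠ insert p s) : ssubsetGraph.Adj (insert p s) w := by
  have above : p ∈ w → s ⊆ w → ssubsetGraph.Adj (insert p s) w := fun hp hs =>
    .inl (ssubset_iff_subset_ne.2 ⟨insert_subset hp hs, hne.symm⟩)
  rcases hsw with hsw | hws
  · rcases hgw with hgw | hwg
    · exact above (hgw.subset hp) (hsg.trans hgw.subset)
    · exact above (hpw hsw hwg) hsw.subset
  · exact .inr (hws.trans_subset (subset_insert p s))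

section Collapse

variable {S : Set (Finset α)} {f g : Finset α} {p : α}

/-- The sets strictly between `f` and `g.erase p` can be deleted one at a time, largest first
(`Q` holds those still present): the link of the largest one `t` is a cone with apex
`insert p t`, and once they are all gone the graph is a cone with apex `insert p f`. -/
theorem graphContractible_induce_collapse (hS : S.Finite) (hp : p ∈ g) (hfg : f ⊂ g.erase p)
    (hint : ∀ u, f ⊂ u → u ⊂ g → u ∈ S)
    (hcomp : ∀ w ∈ S, ssubsetGraph.Adj f w ∧ ssubsetGraph.Adj g w) (Q : Finset (Finset α))
    (hQ : ∀ t ∈ Q, f ⊂ t ∧ t ⊂ g.erase p) :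
    GraphContractible (ssubsetGraph.induce {w | w ∈ S ∧ (f ⊂ w → w ⊆ g.erase p → w ∈ Q)}) := by
  have hpf : p ∉ f := (subset_erase.1 hfg.subset).2
  have apex_mem : ∀ s, f ⊆ s → s ⊂ g.erase p → insert p s ∈ S := fun s hfs hsg =>
    hint _ ((ssubset_iff_of_subset (hfs.trans (subset_insert p s))).2 ⟨p, mem_insert_self p s, hpf⟩)
      (insert_ssubset_of_ssubset_erase hp hsg)
  have apex_not_subset : ∀ s, ¬ insert p s ⊆ g.erase p := fun s h =>
    notMem_erase p g (h (mem_insert_self p s))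
  revert hQ
  refine Finset.induction_on_max_value card Q (fun _ => ?_) fun t Q htQ hmax ih hQ => ?_
  · refine .induce_of_forall_adj (hS.subset (Set.sep_subset _ _)) (v := insert p f)
      ⟨apex_mem f subset_rfl hfg, fun _ h => (apex_not_subset f h).elim⟩ ?_
    rintro w ⟨hwS, hwR⟩ hne
    refine ssubsetGraph_adj_insert hp (hfg.subset.trans (erase_subset p g)) (hcomp w hwS).1
      (hcomp w hwS).2 (fun hfw hwg => ?_) hne
    by_contra hpw
    exact notMem_empty w (hwR hfw (subset_erase.2 ⟨hwg.subset, hpw⟩))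
  obtain ⟨hft, htg⟩ := hQ t (mem_insert_self t Q)
  have hpt : p ∉ t := (subset_erase.1 htg.subset).2
  refine .induce_of_mem (v := t) ⟨hint t hft (htg.trans_subset (erase_subset p g)),
    fun _ _ => mem_insert_self t Q⟩ ?_ ?_
  · refine .induce_of_forall_adj (hS.subset ((Set.sep_subset _ _).trans (Set.sep_subset _ _)))
      (v := insert p t) ⟨⟨apex_mem t hft.subset htg, fun _ h => (apex_not_subset t h).elim⟩,
        .inl (ssubset_insert hpt)⟩ ?_
    rintro w ⟨⟨hwS, hwR⟩, htw⟩ hne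
    refine ssubsetGraph_adj_insert hp (htg.subset.trans (erase_subset p g)) htw (hcomp w hwS).2
      (fun htw' hwg => ?_) hne
    by_contra hpw
    rcases mem_insert.1 (hwR (hft.trans htw') (subset_erase.2 ⟨hwg.subset, hpw⟩)) with rfl | hwQ
    · exact lt_irrefl _ htw'
    · exact (hmax w hwQ).not_gt (card_lt_card htw')
  · have hset : {w | w ∈ {w | w ∈ S ∧ (f ⊂ w → w ⊆ g.erase p → w ∈ insert t Q)} ∧ w ≠ t} =
        {w | w ∈ S ∧ (f ⊂ w → w ⊆ g.erase p → w ∈ Q)} := by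
      ext w
      simp only [Set.mem_ofPred_eq, mem_insert]
      constructor
      · rintro ⟨⟨hwS, hwR⟩, hwt⟩
        exact ⟨hwS, fun h₁ h₂ => (hwR h₁ h₂).resolve_left hwt⟩
      · rintro ⟨hwS, hwR⟩
        refine ⟨⟨hwS, fun h₁ h₂ => .inr (hwR h₁ h₂)⟩, ?_⟩
        rintro rfl
        exact htQ (hwR hft htg.subset)
    rw [hset]
    exact ih fun u hu => hQ u (mem_insert_of_mem hu)

theorem graphContractible_induce_ne_erase (hS : S.Finite) (hp : p ∈ g) (hfg : f ⊂ g.erase p)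
    (hint : ∀ u, f ⊂ u → u ⊂ g → u ∈ S)
    (hcomp : ∀ w ∈ S, ssubsetGraph.Adj f w ∧ ssubsetGraph.Adj g w) :
    GraphContractible (ssubsetGraph.induce {w | w ∈ S ∧ w ≠ g.erase p}) := by
  have hset : {w | w ∈ S ∧ w ≠ g.erase p} =
      {w | w ∈ S ∧ (f ⊂ w → w ⊆ g.erase p → w ∈ (g.erase p).ssubsets.filter (f ⊂ ·))} := by
    ext w
    simp only [Set.mem_ofPred_eq, mem_filter, mem_ssubsets]
    refine and_congr_right fun _ => ⟨fun hne hfw hwg => ⟨ssubset_iff_subset_ne.2 ⟨hwg, hne⟩, hfw⟩,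
      fun h hw => ?_⟩
    subst hw
    exact lt_irrefl _ (h hfg subset_rfl).1
  rw [hset]
  exact graphContractible_induce_collapse hS hp hfg hint hcomp _ fun t ht =>
    ((mem_filter.1 ht).imp_left mem_ssubsets.1).symm

end Collapse

theorem evakoSphere_flagLink {a b : Finset α} (n : ℕ) :
    ∀ {F : Finset (Finset α)}, IsFlag a b F → b.card + 1 = a.card + F.card + n →
      EvakoSphere (ssubsetGraph.induce (flagLink a b F)) (n - 1) := by
  induction n with
  | zero =>
    intro F hF hcard
    rw [hF.flagLink_eq_empty hcard, Nat.cast_zero, zero_sub]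
    exact .empty _ (Set.isEmpty_coe_sort.2 rfl)
  | succ n ih =>
    intro F hF hcard
    refine .induce_of_forall (fun u hu => ?_) ?_
    · rw [flagLink_insert, show ((n + 1 : ℕ) : ℤ) - 1 - 1 = n - 1 by push_cast; ring]
      exact ih (hF.insert hu) (by rw [card_insert_of_notMem hu.2.2.1]; omega)
    obtain ⟨f, hf, g, hg, hcard, hfg, hgap⟩ := hF.exists_gap (by omega)
    obtain ⟨p, hpg, hpf⟩ := exists_mem_notMem_of_card_lt_card (show f.card < g.card by omega)
    have hfp : f ⊂ g.erase p := ssubset_iff_subset_ne.2 ⟨subset_erase.2 ⟨hfg, hpf⟩, fun h => by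
      have := congrArg card h
      rw [card_erase_of_mem hpg] at this
      omega⟩
    exact ⟨g.erase p, hF.mem_flagLink_of_gap hf hg hgap hfp (erase_ssubset hpg),
      graphContractible_induce_ne_erase flagLink_finite hpg hfp
        (fun _ => hF.mem_flagLink_of_gap hf hg hgap)
        fun _ hw =>
          ⟨ssubsetGraph_adj_of_mem_flagLink hw hf, ssubsetGraph_adj_of_mem_flagLink hw hg⟩⟩

theorem isFlag_pair (x : Finset α) : IsFlag ∅ x {∅, x} where
  isChain := by
    rw [coe_pair]
    exact .pair (empty_subset x)
  bot_mem := mem_insert_self _ _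
  top_mem := mem_insert_of_mem (mem_singleton_self x)
  bounds := by simp

theorem flagLink_pair (x : Finset α) :
    flagLink ∅ x {∅, x} = {u | u.Nonempty ∧ u ⊂ x} := by
  ext u
  simp only [flagLink, Set.mem_ofPred_eq, mem_insert, mem_singleton, forall_eq_or_imp,
    forall_eq, empty_subset, true_or, true_and, nonempty_iff_ne_empty, ssubset_iff_subset_ne]
  grind

end Finset

def barycentricInduceSSubsetIso {α : Type} [DecidableEq α] {K : Finset (Finset α)}
    (hK : IsSimplicialComplex K) {x : Finset α} (hx : x ∈ K) :
    Finset.ssubsetGraph.induce {u | u.Nonempty ∧ u ⊂ x} ≃g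
      (barycentric K).induce {y : {s : Finset α // s ∈ K} | y.1 ⊂ x} where
  toFun u := ⟨⟨u.1, hK.2 x hx u.1 u.2.2.subset u.2.1⟩, u.2.2⟩
  invFun y := ⟨y.1.1, hK.1 _ y.1.2, y.2⟩
  left_inv _ := rfl
  right_inv _ := rfl
  map_rel_iff' := Iff.rfl

/-- If `x` is a simplex of dimension `d` (i.e. of cardinality `d+1`) in a
finite abstract simplicial complex `K`, then the stable sphere `S⁻(x)` in the
Barycentric refinement, the graph on all proper nonempty subsets of `x` with
adjacency given by proper inclusion, is an Evako `(d-1)`-sphere. -/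
theorem stable_sphere_is_sphere {α : Type} [DecidableEq α]
    (K : Finset (Finset α)) (hK : IsSimplicialComplex K)
    (x : Finset α) (hx : x ∈ K) (d : ℕ) (hd : x.card = d + 1) :
    EvakoSphere
      ((barycentric K).induce {y : {s : Finset α // s ∈ K} | y.1 ⊂ x})
      ((d : ℤ) - 1) := by
  have hx₀ : x.Nonempty := Finset.card_pos.1 (by omega)
  have hsphere := Finset.evakoSphere_flagLink d (Finset.isFlag_pair x) (by
    rw [Finset.card_pair hx₀.ne_empty.symm, Finset.card_empty, hd]
    omega)
  rw [Finset.flagLink_pair] at hsphere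
  exact hsphere.of_iso (barycentricInduceSSubsetIso hK hx)
end

section
/- The graph product defined on vertex sets V(G)×V(H) by connecting (a,b) and (c,d) iff (a,c) is an edge of G or (b,d) is an edge of H is distributive over the Zykov join: G · (H + K) ≅ G·H + G·K. -/
/-- The large graph product: vertices are pairs, and distinct pairs `(a,b)`,
`(c,d)` are adjacent iff `{a,c}` is an edge of `G` or `{b,d}` is an edge of
`H`. -/
def zykovProd {V W : Type} (G : SimpleGraph V) (H : SimpleGraph W) :
    SimpleGraph (V × W) where
  Adj x y := x ≠ y ∧ (G.Adj x.1 y.1 ∨ H.Adj x.2 y.2)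
  symm := by
    refine ⟨?_⟩
    intro x y h
    exact ⟨h.1.symm, h.2.imp (fun h' => h'.symm) (fun h' => h'.symm)⟩
  loopless := by refine ⟨?_⟩; intro x h; exact h.1 rfl

section

variable {V W : Type} {G : SimpleGraph V} {H : SimpleGraph W}

@[simp]
lemma zykovJoin_adj_inl_inl {a b : V} : (zykovJoin G H).Adj (.inl a) (.inl b) ↔ G.Adj a b := Iff.rfl

@[simp]
lemma zykovJoin_adj_inr_inr {a b : W} : (zykovJoin G H).Adj (.inr a) (.inr b) ↔ H.Adj a b := Iff.rfl

@[simp]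
lemma zykovJoin_adj_inl_inr {a : V} {b : W} : (zykovJoin G H).Adj (.inl a) (.inr b) := trivial

@[simp]
lemma zykovJoin_adj_inr_inl {a : W} {b : V} : (zykovJoin G H).Adj (.inr a) (.inl b) := trivial

@[simp]
lemma zykovProd_adj {x y : V × W} :
    (zykovProd G H).Adj x y ↔ x ≠ y ∧ (G.Adj x.1 y.1 ∨ H.Adj x.2 y.2) := Iff.rfl

end

def zykovProdZykovJoinIso {V W U : Type}
    (G : SimpleGraph V) (H : SimpleGraph W) (K : SimpleGraph U) :
    zykovProd G (zykovJoin H K) ≃g zykovJoin (zykovProd G H) (zykovProd G K) where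
  toEquiv := Equiv.prodSumDistrib V W U
  map_rel_iff' := by
    -- Across summands both sides are adjacent, on the left because `H + K` joins `b` to `d`;
    -- within a summand the adjacencies agree since `Sum.inl`, `Sum.inr` are injective.
    rintro ⟨a, b | b⟩ ⟨c, d | d⟩ <;> simp [Prod.ext_iff]

/-- The graph product is distributive over the Zykov join:
`G · (H + K) ≅ G·H + G·K`. -/
theorem zykovProd_zykovJoin_distrib {V W U : Type}
    (G : SimpleGraph V) (H : SimpleGraph W) (K : SimpleGraph U) :
    Nonempty
      (zykovProd G (zykovJoin H K) ≃g
        zykovJoin (zykovProd G H) (zykovProd G K)) :=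
  ⟨zykovProdZykovJoinIso G H K⟩
end
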